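/- If X = D ×₁ U ×₂ V ×₃ W is a Tucker decomposition of X with factor matrices U, V, W of full column rank, then TriRank(X) = TriRank(D). -/

import Mathlib

open Matrix

noncomputable def tripleProd {n1 n2 n3 r : ℕ}
    (A : Fin n1 → Fin r → Fin r → ℝ) (B : Fin r → Fin n2 → Fin r → ℝ)
    (C : Fin r → Fin r → Fin n3 → ℝ) : Fin n1 → Fin n2 → Fin n3 → ℝ :=
  fun i j t => ∑ p : Fin r, ∑ q : Fin r, ∑ s : Fin r, A i q s * B p j s * C p q t

noncomputable def TriRank {n1 n2 n3 : ℕ} (X : Fin n1 → Fin n2 → Fin n3 → ℝ) : ℕ :=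
  sInf {r : ℕ | ∃ (A : Fin n1 → Fin r → Fin r → ℝ) (B : Fin r → Fin n2 → Fin r → ℝ)
    (C : Fin r → Fin r → Fin n3 → ℝ), X = tripleProd A B C}

noncomputable def CPRank {n1 n2 n3 : ℕ} (X : Fin n1 → Fin n2 → Fin n3 → ℝ) : ℕ :=
  sInf {r : ℕ | ∃ (A : Fin n1 → Fin r → ℝ) (B : Fin n2 → Fin r → ℝ) (C : Fin n3 → Fin r → ℝ),
    X = fun i j t => ∑ p : Fin r, A i p * B j p * C t p}

def mid (a b c : ℕ) : ℕ := max (min a b) (min (max a b) c)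

noncomputable def mode1 {m' m n k : ℕ} (U : Matrix (Fin m') (Fin m) ℝ)
    (D : Fin m → Fin n → Fin k → ℝ) : Fin m' → Fin n → Fin k → ℝ :=
  fun i j t => ∑ p : Fin m, U i p * D p j t

noncomputable def mode2 {m n' n k : ℕ} (V : Matrix (Fin n') (Fin n) ℝ)
    (D : Fin m → Fin n → Fin k → ℝ) : Fin m → Fin n' → Fin k → ℝ :=
  fun i j t => ∑ q : Fin n, V j q * D i q t

noncomputable def mode3 {m n k' k : ℕ} (W : Matrix (Fin k') (Fin k) ℝ)
    (D : Fin m → Fin n → Fin k → ℝ) : Fin m → Fin n → Fin k' → ℝ :=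
  fun i j t => ∑ s : Fin k, W t s * D i j s

noncomputable def tucker {n1 n2 n3 r1 r2 r3 : ℕ} (U : Matrix (Fin n1) (Fin r1) ℝ)
    (V : Matrix (Fin n2) (Fin r2) ℝ) (W : Matrix (Fin n3) (Fin r3) ℝ)
    (D : Fin r1 → Fin r2 → Fin r3 → ℝ) : Fin n1 → Fin n2 → Fin n3 → ℝ :=
  mode1 U (mode2 V (mode3 W D))

def unfold1 {a b c : ℕ} (T : Fin a → Fin b → Fin c → ℝ) : Matrix (Fin a) (Fin b × Fin c) ℝ :=
  fun i jt => T i jt.1 jt.2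
def unfold2 {a b c : ℕ} (T : Fin a → Fin b → Fin c → ℝ) : Matrix (Fin b) (Fin a × Fin c) ℝ :=
  fun j it => T it.1 j it.2
def unfold3 {a b c : ℕ} (T : Fin a → Fin b → Fin c → ℝ) : Matrix (Fin c) (Fin a × Fin b) ℝ :=
  fun t ij => T ij.1 ij.2 t

/-! Factor matrices of full column rank have left inverses, so the Tucker decomposition can be
undone: `D = X ×₁ U⁺ ×₂ V⁺ ×₃ W⁺`. A mode product applied to a triple product only transforms the
matching factor and keeps the inner size `r`, so every triple-product factorization of `D` yields
one of `X` of the same size and conversely; the two sets whose infima define `TriRank` agree. -/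

open Finset

theorem Matrix.exists_mul_eq_one_of_rank_eq_card {m n K : Type*} [Fintype m] [Fintype n]
    [DecidableEq m] [DecidableEq n] [Field K] (U : Matrix m n K)
    (h : U.rank = Fintype.card n) : ∃ U' : Matrix n m K, U' * U = 1 := by
  have hker : LinearMap.ker U.mulVecLin = ⊥ := by
    have := LinearMap.finrank_range_add_finrank_ker U.mulVecLin
    rw [← Matrix.rank, h, Module.finrank_fintype_fun_eq_card] at this
    exact Submodule.finrank_eq_zero.mp (by omega)
  obtain ⟨g, hg⟩ := U.mulVecLin.exists_leftInverse_of_injective hker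
  refine ⟨LinearMap.toMatrix' g, Matrix.toLin'.injective ?_⟩
  rw [Matrix.toLin'_mul, Matrix.toLin'_one, Matrix.toLin'_toMatrix']
  exact hg

section ModeProducts

variable {m m' m'' n n' n'' k k' k'' : ℕ}

theorem mode1_mode1 (U₂ : Matrix (Fin m'') (Fin m') ℝ) (U₁ : Matrix (Fin m') (Fin m) ℝ)
    (D : Fin m → Fin n → Fin k → ℝ) : mode1 U₂ (mode1 U₁ D) = mode1 (U₂ * U₁) D := by
  funext i j t
  simp only [mode1, Matrix.mul_apply, mul_sum, sum_mul, mul_assoc]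
  exact sum_comm

theorem mode2_mode2 (V₂ : Matrix (Fin n'') (Fin n') ℝ) (V₁ : Matrix (Fin n') (Fin n) ℝ)
    (D : Fin m → Fin n → Fin k → ℝ) : mode2 V₂ (mode2 V₁ D) = mode2 (V₂ * V₁) D := by
  funext i j t
  simp only [mode2, Matrix.mul_apply, mul_sum, sum_mul, mul_assoc]
  exact sum_comm

theorem mode3_mode3 (W₂ : Matrix (Fin k'') (Fin k') ℝ) (W₁ : Matrix (Fin k') (Fin k) ℝ)
    (D : Fin m → Fin n → Fin k → ℝ) : mode3 W₂ (mode3 W₁ D) = mode3 (W₂ * W₁) D := by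
  funext i j t
  simp only [mode3, Matrix.mul_apply, mul_sum, sum_mul, mul_assoc]
  exact sum_comm

theorem mode2_mode1 (V : Matrix (Fin n') (Fin n) ℝ) (U : Matrix (Fin m') (Fin m) ℝ)
    (D : Fin m → Fin n → Fin k → ℝ) : mode2 V (mode1 U D) = mode1 U (mode2 V D) := by
  funext i j t
  simp only [mode1, mode2, mul_sum, mul_left_comm]
  exact sum_comm

theorem mode3_mode1 (W : Matrix (Fin k') (Fin k) ℝ) (U : Matrix (Fin m') (Fin m) ℝ)
    (D : Fin m → Fin n → Fin k → ℝ) : mode3 W (mode1 U D) = mode1 U (mode3 W D) := by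
  funext i j t
  simp only [mode1, mode3, mul_sum, mul_left_comm]
  exact sum_comm

theorem mode3_mode2 (W : Matrix (Fin k') (Fin k) ℝ) (V : Matrix (Fin n') (Fin n) ℝ)
    (D : Fin m → Fin n → Fin k → ℝ) : mode3 W (mode2 V D) = mode2 V (mode3 W D) := by
  funext i j t
  simp only [mode2, mode3, mul_sum, mul_left_comm]
  exact sum_comm

theorem mode1_one (D : Fin m → Fin n → Fin k → ℝ) : mode1 1 D = D := by
  funext i j t
  simp [mode1, Matrix.one_apply]

theorem mode2_one (D : Fin m → Fin n → Fin k → ℝ) : mode2 1 D = D := by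
  funext i j t
  simp [mode2, Matrix.one_apply]

theorem mode3_one (D : Fin m → Fin n → Fin k → ℝ) : mode3 1 D = D := by
  funext i j t
  simp [mode3, Matrix.one_apply]

theorem tucker_tucker {r1 r2 r3 : ℕ} (U₂ : Matrix (Fin m') (Fin m) ℝ)
    (V₂ : Matrix (Fin n') (Fin n) ℝ) (W₂ : Matrix (Fin k') (Fin k) ℝ)
    (U₁ : Matrix (Fin m) (Fin r1) ℝ) (V₁ : Matrix (Fin n) (Fin r2) ℝ)
    (W₁ : Matrix (Fin k) (Fin r3) ℝ) (D : Fin r1 → Fin r2 → Fin r3 → ℝ) :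
    tucker U₂ V₂ W₂ (tucker U₁ V₁ W₁ D) = tucker (U₂ * U₁) (V₂ * V₁) (W₂ * W₁) D := by
  simp only [tucker]
  rw [mode3_mode1, mode3_mode2, mode2_mode1, mode3_mode3, mode2_mode2, mode1_mode1]

theorem tucker_one (D : Fin m → Fin n → Fin k → ℝ) : tucker 1 1 1 D = D := by
  rw [tucker, mode3_one, mode2_one, mode1_one]

end ModeProducts

section TripleProduct

variable {n1 n1' n2 n2' n3 n3' r : ℕ}
  (A : Fin n1 → Fin r → Fin r → ℝ) (B : Fin r → Fin n2 → Fin r → ℝ)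
  (C : Fin r → Fin r → Fin n3 → ℝ)

theorem mode1_tripleProd (U : Matrix (Fin n1') (Fin n1) ℝ) :
    mode1 U (tripleProd A B C) = tripleProd (mode1 U A) B C := by
  funext i j t
  simp only [mode1, tripleProd, mul_sum, sum_mul]
  rw [sum_comm]
  refine sum_congr rfl fun p _ => ?_
  rw [sum_comm]
  refine sum_congr rfl fun q _ => ?_
  rw [sum_comm]
  exact sum_congr rfl fun s _ => sum_congr rfl fun a _ => by ring

theorem mode2_tripleProd (V : Matrix (Fin n2') (Fin n2) ℝ) :
    mode2 V (tripleProd A B C) = tripleProd A (mode2 V B) C := by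
  funext i j t
  simp only [mode2, tripleProd, mul_sum, sum_mul]
  rw [sum_comm]
  refine sum_congr rfl fun p _ => ?_
  rw [sum_comm]
  refine sum_congr rfl fun q _ => ?_
  rw [sum_comm]
  exact sum_congr rfl fun s _ => sum_congr rfl fun b _ => by ring

theorem mode3_tripleProd (W : Matrix (Fin n3') (Fin n3) ℝ) :
    mode3 W (tripleProd A B C) = tripleProd A B (mode3 W C) := by
  funext i j t
  simp only [mode3, tripleProd, mul_sum]
  rw [sum_comm]
  refine sum_congr rfl fun p _ => ?_
  rw [sum_comm]
  refine sum_congr rfl fun q _ => ?_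
  rw [sum_comm]
  exact sum_congr rfl fun s _ => sum_congr rfl fun c _ => by ring

theorem tucker_tripleProd (U : Matrix (Fin n1') (Fin n1) ℝ) (V : Matrix (Fin n2') (Fin n2) ℝ)
    (W : Matrix (Fin n3') (Fin n3) ℝ) :
    tucker U V W (tripleProd A B C) = tripleProd (mode1 U A) (mode2 V B) (mode3 W C) := by
  rw [tucker, mode3_tripleProd, mode2_tripleProd, mode1_tripleProd]

end TripleProduct

theorem triRank_tucker_of_mul_eq_one {n1 n2 n3 r1 r2 r3 : ℕ}
    {U : Matrix (Fin n1) (Fin r1) ℝ} {V : Matrix (Fin n2) (Fin r2) ℝ}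
    {W : Matrix (Fin n3) (Fin r3) ℝ} {U' : Matrix (Fin r1) (Fin n1) ℝ}
    {V' : Matrix (Fin r2) (Fin n2) ℝ} {W' : Matrix (Fin r3) (Fin n3) ℝ}
    (hU : U' * U = 1) (hV : V' * V = 1) (hW : W' * W = 1) (D : Fin r1 → Fin r2 → Fin r3 → ℝ) :
    TriRank (tucker U V W D) = TriRank D := by
  have hD : tucker U' V' W' (tucker U V W D) = D := by
    rw [tucker_tucker, hU, hV, hW, tucker_one]
  unfold TriRank
  congr 1
  ext r
  constructor
  · rintro ⟨A, B, C, h⟩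
    exact ⟨mode1 U' A, mode2 V' B, mode3 W' C, by rw [← hD, h, tucker_tripleProd]⟩
  · rintro ⟨A, B, C, h⟩
    exact ⟨mode1 U A, mode2 V B, mode3 W C, by rw [h, tucker_tripleProd]⟩

theorem stmt7 {n1 n2 n3 r1 r2 r3 : ℕ}
    (U : Matrix (Fin n1) (Fin r1) ℝ) (V : Matrix (Fin n2) (Fin r2) ℝ)
    (W : Matrix (Fin n3) (Fin r3) ℝ) (D : Fin r1 → Fin r2 → Fin r3 → ℝ)
    (X : Fin n1 → Fin n2 → Fin n3 → ℝ) (hX : X = tucker U V W D)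
    (hU : U.rank = r1) (hV : V.rank = r2) (hW : W.rank = r3) :
    TriRank X = TriRank D := by
  obtain ⟨U', hU'⟩ := U.exists_mul_eq_one_of_rank_eq_card (by rwa [Fintype.card_fin])
  obtain ⟨V', hV'⟩ := V.exists_mul_eq_one_of_rank_eq_card (by rwa [Fintype.card_fin])
  obtain ⟨W', hW'⟩ := W.exists_mul_eq_one_of_rank_eq_card (by rwa [Fintype.card_fin])
  rw [hX, triRank_tucker_of_mul_eq_one hU' hV' hW']
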